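/- The number of rational points over F_p(t) of the curves X_a: y^2 = x(x^r+1)(x^r+a^r) is unbounded as a varies in F_p(t) \ F_p; i.e., for every N there is a non-constant a such that X_a has more than N rational points. -/

import Mathlib

/-!
Take `a = t ^ (p ^ n + 1)` with `n = 3 ^ N`. For every `j ≤ N`, `q = p ^ 3 ^ j` satisfies
`q + 1 ∣ p ^ n + 1`, so `a = x ^ (q + 1)` with `x = t ^ ((p ^ n + 1) / (q + 1))`. Writing
`w = x ^ r`, Frobenius gives `x ^ r + a ^ r = w (1 + w) ^ q`, hence
`x (x ^ r + 1)(x ^ r + a ^ r) = x ^ (r + 1) (1 + w) ^ (q + 1)`, a square since `r` and `q` are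
odd. The `N + 1` values of `j` give `N + 1` distinct abscissae.
-/

lemma pow_add_one_dvd_pow_add_one_of_dvd (a : ℕ) {k n : ℕ} (hn : Odd n) (hkn : k ∣ n) :
    a ^ k + 1 ∣ a ^ n + 1 := by
  have hodd : Odd (n / k) := hn.of_dvd_nat (Nat.div_dvd_of_dvd hkn)
  simpa only [one_pow, ← pow_mul, Nat.mul_div_cancel' hkn] using
    hodd.nat_add_dvd_pow_add_pow (a ^ k) 1

def IsCurvePoint {R : Type*} [CommRing R] (r : ℕ) (a : R) (P : R × R) : Prop :=
  P.2 ^ 2 = P.1 * (P.1 ^ r + 1) * (P.1 ^ r + a ^ r)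

lemma isCurvePoint_pow_expChar_pow_add_one {R : Type*} [CommRing R] {p : ℕ} [ExpChar R p]
    (hp : Odd p) {r : ℕ} (hr : Odd r) (k : ℕ) (x : R) :
    IsCurvePoint r (x ^ (p ^ k + 1))
      (x, x ^ ((r + 1) / 2) * (1 + x ^ r) ^ ((p ^ k + 1) / 2)) := by
  have hr2 : 2 * ((r + 1) / 2) = r + 1 := Nat.mul_div_cancel' hr.add_one.two_dvd
  have hq2 : 2 * ((p ^ k + 1) / 2) = p ^ k + 1 := Nat.mul_div_cancel' hp.pow.add_one.two_dvd
  have hfrob : (1 + x ^ r) ^ p ^ k = 1 + (x ^ r) ^ p ^ k := by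
    rw [add_pow_expChar_pow, one_pow]
  unfold IsCurvePoint
  calc (x ^ ((r + 1) / 2) * (1 + x ^ r) ^ ((p ^ k + 1) / 2)) ^ 2
      = x ^ (r + 1) * (1 + x ^ r) ^ (p ^ k + 1) := by
        rw [mul_pow, ← pow_mul, ← pow_mul, mul_comm _ 2, mul_comm _ 2, hr2, hq2]
    _ = x * (x ^ r + 1) * (x ^ r * (1 + (x ^ r) ^ p ^ k)) := by
        rw [pow_succ, ← hfrob]; ring
    _ = x * (x ^ r + 1) * (x ^ r + (x ^ (p ^ k + 1)) ^ r) := by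
        rw [pow_succ, mul_pow, ← pow_mul, ← pow_mul, mul_comm (p ^ k) r]; ring

namespace RatFunc

variable {K : Type*} [Field K]

lemma intDegree_X_pow (n : ℕ) : intDegree (X ^ n : RatFunc K) = n := by
  rw [← algebraMap_X, ← map_pow, intDegree_polynomial, Polynomial.natDegree_X_pow]

lemma X_pow_injective : Function.Injective (X ^ · : ℕ → RatFunc K) := fun m n h => by
  simpa only [intDegree_X_pow, Nat.cast_inj] using congrArg intDegree h

lemma X_pow_notMem_range_algebraMap {n : ℕ} (hn : n ≠ 0) :
    (X ^ n : RatFunc K) ∉ Set.range (algebraMap K (RatFunc K)) := by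
  rintro ⟨c, hc⟩
  have := congrArg intDegree hc
  rw [algebraMap_eq_C, intDegree_C, intDegree_X_pow] at this
  omega

end RatFunc

open RatFunc Finset in
theorem stmt6_general (p : ℕ) [Fact p.Prime] (hp : 3 < p) (r : ℕ) (hr : Odd r)
    (N : ℕ) :
    ∃ a : RatFunc (ZMod p),
      a ∉ Set.range (algebraMap (ZMod p) (RatFunc (ZMod p))) ∧
      ∃ S : Finset (RatFunc (ZMod p) × RatFunc (ZMod p)),
        N < S.card ∧
        ∀ q ∈ S, q.2 ^ 2 = q.1 * (q.1 ^ r + 1) * (q.1 ^ r + a ^ r) := by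
  classical
  have hp_odd : Odd p := (Fact.out : p.Prime).odd_of_ne_two (by omega)
  set M := p ^ 3 ^ N + 1
  set d : ℕ → ℕ := fun j => p ^ 3 ^ j + 1
  have hd_dvd (j : ℕ) (hj : j ∈ range (N + 1)) : d j ∣ M :=
    pow_add_one_dvd_pow_add_one_of_dvd p (Odd.pow (by decide))
      (pow_dvd_pow 3 (by simpa [Nat.lt_succ_iff] using hj))
  have hd_inj : Function.Injective d := fun i j h =>
    Nat.pow_right_injective (by omega) (Nat.pow_right_injective (Nat.Prime.two_le Fact.out)
      (Nat.add_right_cancel h))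
  have hx_inj : Set.InjOn (fun j => M / d j) (range (N + 1)) := fun i hi j hj h =>
    hd_inj (by rw [← Nat.div_div_self (hd_dvd i hi) (by positivity), ← Nat.div_div_self
      (hd_dvd j hj) (by positivity)]; exact congrArg (M / ·) h)
  let P (j : ℕ) : RatFunc (ZMod p) × RatFunc (ZMod p) :=
    (X ^ (M / d j), (X ^ (M / d j)) ^ ((r + 1) / 2) * (1 + (X ^ (M / d j)) ^ r) ^ (d j / 2))
  refine ⟨X ^ M, X_pow_notMem_range_algebraMap (by positivity), (range (N + 1)).image P, ?_, ?_⟩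
  · rw [card_image_of_injOn (Set.InjOn.of_comp (f := P) (g := Prod.fst)
      (X_pow_injective.comp_injOn hx_inj)), card_range]
    omega
  · simp only [mem_image]
    rintro _ ⟨j, hj, rfl⟩
    have ha : (X ^ M : RatFunc (ZMod p)) = (X ^ (M / d j)) ^ d j := by
      rw [← pow_mul, Nat.div_mul_cancel (hd_dvd j hj)]
    rw [ha]
    exact isCurvePoint_pow_expChar_pow_add_one hp_odd hr (3 ^ j) _

/-- The number of rational points over `F_p(t)` of the curves
`X_a : y^2 = x (x^r + 1)(x^r + a^r)` is unbounded as `a` varies in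
`F_p(t) \ F_p`: for every `N` there is a non-constant `a` such that `X_a`
has more than `N` rational points. -/
theorem stmt6 (p : ℕ) [Fact p.Prime] (hp : 3 < p) (r : ℕ) (hr : Odd r)
    (hrp : Nat.Coprime r p) (N : ℕ) :
    ∃ a : RatFunc (ZMod p),
      a ∉ Set.range (algebraMap (ZMod p) (RatFunc (ZMod p))) ∧
      ∃ S : Finset (RatFunc (ZMod p) × RatFunc (ZMod p)),
        N < S.card ∧
        ∀ q ∈ S, q.2 ^ 2 = q.1 * (q.1 ^ r + 1) * (q.1 ^ r + a ^ r) :=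
  stmt6_general p hp r hr N
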